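/- arXiv:math-ph/0502044 — 3 statements merged into one kernel-verified Lean document; each statement's English description precedes it below -/
import Mathlib

section
/- Let δ > 0 and let (x_n)_{n ≥ -1} be a sequence of complex numbers satisfying x_{n+1} = 2 x_n x_{n-1} - x_{n-2} for n ≥ 1. Suppose there exists N ≥ 0 such that |x_{N-1}| ≤ 1 + δ, |x_N| > 1 + δ, and |x_{N+1}| > 1 + δ. Then |x_{n+2}| > |x_{n+1}| · |x_n| for all n ≥ N. -/
/-- Once the escape condition holds at index `N`, the traces grow
super-multiplicatively: `|x (n+2)| > |x (n+1)| * |x n|` for all `n ≥ N`. -/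
theorem trace_supermultiplicative (δ : ℝ) (hδ : 0 < δ) (x : ℤ → ℂ)
    (hrec : ∀ n : ℤ, 1 ≤ n → x (n + 1) = 2 * x n * x (n - 1) - x (n - 2))
    (N : ℤ) (hN : 0 ≤ N)
    (h1 : ‖x (N - 1)‖ ≤ 1 + δ)
    (h2 : 1 + δ < ‖x N‖)
    (h3 : 1 + δ < ‖x (N + 1)‖) :
    ∀ n : ℤ, N ≤ n →
      ‖x (n + 1)‖ * ‖x n‖ < ‖x (n + 2)‖ := by
  have habs : ∀ m : ℤ, N ≤ m →
      x (m + 2) = 2 * x (m + 1) * x m - x (m - 1) := by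
    intro m hm
    have h := hrec (m + 1) (by omega)
    rw [show m + 1 + 1 = m + 2 from by ring, show m + 1 - 1 = m from by ring,
      show m + 1 - 2 = m - 1 from by ring] at h
    exact h
  have hlow : ∀ m : ℤ, N ≤ m →
      2 * ‖x (m + 1)‖ * ‖x m‖ - ‖x (m - 1)‖
        ≤ ‖x (m + 2)‖ := by
    intro m hm
    rw [habs m hm]
    calc 2 * ‖x (m + 1)‖ * ‖x m‖ - ‖x (m - 1)‖
        = ‖2 * x (m + 1) * x m‖ - ‖x (m - 1)‖ := by
          simp [norm_mul]
      _ ≤ ‖2 * x (m + 1) * x m - x (m - 1)‖ := by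
          simpa using
            norm_sub_norm_le (2 * x (m + 1) * x m) (x (m - 1))
  have key : ∀ n : ℤ, N ≤ n →
      ‖x (n - 1)‖ < ‖x (n + 1)‖ * ‖x n‖ ∧
      1 + δ < ‖x n‖ ∧ 1 + δ < ‖x (n + 1)‖ := by
    refine fun n hn => Int.le_induction (motive := fun n _ => ‖x (n - 1)‖ < ‖x (n + 1)‖ * ‖x n‖ ∧ 1 + δ < ‖x n‖ ∧ 1 + δ < ‖x (n + 1)‖) ?_ ?_ n hn
    · refine ⟨?_, h2, h3⟩
      nlinarith [norm_nonneg (x (N - 1))]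
    · intro n hn ih
      obtain ⟨ih1, ih2, ih3⟩ := ih
      have hL := hlow n hn
      have hgrow : ‖x (n + 1)‖ * ‖x n‖
          < ‖x (n + 2)‖ := by nlinarith
      refine ⟨?_, ih3, ?_⟩
      · rw [show n + 1 - 1 = n from by ring, show n + 1 + 1 = n + 2 from by ring]
        have ha : (0:ℝ) < ‖x (n + 1)‖ := by linarith
        have hb : (0:ℝ) < ‖x n‖ := by linarith
        have h1a : (1:ℝ) < ‖x (n + 1)‖ := by linarith
        nlinarith [mul_lt_mul_of_pos_right hgrow ha,
          mul_pos (mul_pos hb (sub_pos.mpr h1a))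
            (show (0:ℝ) < ‖x (n + 1)‖ + 1 by linarith)]
      · rw [show n + 1 + 1 = n + 2 from by ring]
        nlinarith
  intro n hn
  obtain ⟨k1, k2, k3⟩ := key n hn
  have hL := hlow n hn
  nlinarith
end

section
/- Let δ > 0 and let (x_n)_{n ≥ -1} be a sequence of complex numbers satisfying x_{n+1} = 2 x_n x_{n-1} - x_{n-2} for n ≥ 1. Suppose there exists N ≥ 0 with |x_{N-1}| ≤ 1 + δ, |x_N| > 1 + δ, and |x_{N+1}| > 1 + δ. Then |x_{N+n}| ≥ (1 + δ)^{F_n} for all n ≥ 0, where F_n is the n-th Fibonacci number with F_0 = F_1 = 1. -/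
/-- Fibonacci numbers with the convention `F 0 = F 1 = 1`. -/
def fibF : ℕ → ℕ
  | 0 => 1
  | 1 => 1
  | n + 2 => fibF (n + 1) + fibF n

/-- Once the escape condition holds at index `N`, the traces grow at least like
`(1+δ)^{F_n}`. -/
theorem trace_fib_growth (δ : ℝ) (hδ : 0 < δ) (x : ℤ → ℂ)
    (hrec : ∀ n : ℤ, 1 ≤ n → x (n + 1) = 2 * x n * x (n - 1) - x (n - 2))
    (N : ℤ) (hN : 0 ≤ N)
    (h1 : ‖x (N - 1)‖ ≤ 1 + δ)
    (h2 : 1 + δ < ‖x N‖)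
    (h3 : 1 + δ < ‖x (N + 1)‖) :
    ∀ n : ℕ, (1 + δ) ^ fibF n ≤ ‖x (N + n)‖ := by
  have hδ1 : (1:ℝ) ≤ 1 + δ := by linarith
  have key : ∀ n : ℕ,
      (1 + δ) ^ fibF n ≤ ‖x (N + n)‖ ∧
      (1 + δ) ^ fibF (n + 1) ≤ ‖x (N + n + 1)‖ ∧
      ‖x (N + n - 1)‖ ≤ ‖x (N + n)‖ * ‖x (N + n + 1)‖ := by
    intro n
    induction n with
    | zero =>
      simp only [Nat.cast_zero, add_zero]
      refine ⟨by simpa [fibF] using h2.le, by simpa [fibF] using h3.le, ?_⟩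
      calc ‖x (N - 1)‖ ≤ 1 + δ := h1
        _ ≤ ‖x N‖ := h2.le
        _ = ‖x N‖ * 1 := by ring
        _ ≤ ‖x N‖ * ‖x (N + 1)‖ := by
            gcongr
            exact le_trans hδ1 h3.le
    | succ n ih =>
      obtain ⟨hb, hc, ha⟩ := ih
      have hB0 : (0:ℝ) ≤ ‖x (N + n)‖ := norm_nonneg _
      have hC0 : (0:ℝ) ≤ ‖x (N + n + 1)‖ := norm_nonneg _
      have hpn : (1:ℝ) ≤ (1 + δ) ^ fibF n := one_le_pow₀ hδ1
      have hpn1 : (1:ℝ) ≤ (1 + δ) ^ fibF (n + 1) := one_le_pow₀ hδ1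
      have hB1 : (1:ℝ) ≤ ‖x (N + n)‖ := le_trans hpn hb
      have hC1 : (1:ℝ) ≤ ‖x (N + n + 1)‖ := le_trans hpn1 hc
      have hn0 : (0:ℤ) ≤ (n:ℤ) := Int.natCast_nonneg n
      have h1n : (1:ℤ) ≤ N + n + 1 := by linarith
      have hrec' := hrec (N + n + 1) h1n
      have e1 : (N + (n:ℤ) + 1) + 1 = N + n + 2 := by ring
      have e2 : (N + (n:ℤ) + 1) - 1 = N + n := by ring
      have e3 : (N + (n:ℤ) + 1) - 2 = N + n - 1 := by ring
      rw [e1, e2, e3] at hrec'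
      have htri : ‖2 * x (N + n + 1) * x (N + n)‖ -
          ‖x (N + n - 1)‖ ≤ ‖x (N + n + 2)‖ := by
        rw [hrec']
        exact norm_sub_norm_le _ _
      have habs2 : ‖2 * x (N + n + 1) * x (N + n)‖ =
          2 * ‖x (N + n + 1)‖ * ‖x (N + n)‖ := by
        simp [norm_mul]
      rw [habs2] at htri
      have hD : ‖x (N + n)‖ * ‖x (N + n + 1)‖ ≤
          ‖x (N + n + 2)‖ := by nlinarith
      have ecast : (N : ℤ) + ((n : ℕ) + 1 : ℕ) = N + n + 1 := by push_cast; ring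
      rw [ecast]
      refine ⟨hc, ?_, ?_⟩
      · have e4 : (N + (n:ℤ) + 1) + 1 = N + n + 2 := by ring
        rw [e4]
        have : (1 + δ) ^ fibF (n + 2) ≤
            ‖x (N + n)‖ * ‖x (N + n + 1)‖ := by
          rw [show fibF (n + 2) = fibF (n + 1) + fibF n from rfl, pow_add]
          calc (1 + δ) ^ fibF (n + 1) * (1 + δ) ^ fibF n
              ≤ ‖x (N + n + 1)‖ * ‖x (N + n)‖ := by
                apply mul_le_mul hc hb (by positivity) hC0
            _ = ‖x (N + n)‖ * ‖x (N + n + 1)‖ := mul_comm _ _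
        exact le_trans this hD
      · have e5 : (N + (n:ℤ) + 1) - 1 = N + n := by ring
        have e6 : (N + (n:ℤ) + 1) + 1 = N + n + 2 := by ring
        rw [e5, e6]
        nlinarith [norm_nonneg (x (N + n + 2))]
  intro n
  exact (key n).1
end

section
/- Let δ > 0 and let (x_n)_{n ≥ -1} be a sequence of complex numbers with x_{-1} = 1 satisfying x_{n+1} = 2 x_n x_{n-1} - x_{n-2} for n ≥ 1, and suppose that for no N ≥ 0 do we have simultaneously |x_{N-1}| ≤ 1 + δ, |x_N| > 1 + δ, |x_{N+1}| > 1 + δ. If in addition the invariant x_{n+1}^2 + x_n^2 + x_{n-1}^2 - 2 x_{n+1} x_n x_{n-1} - 1 equals a fixed constant λ²/4 for all n, then the sequence (x_n) is bounded. -/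
/-- If the escape condition never holds and the trace-map invariant is constant,
then the trace sequence is bounded. -/
theorem trace_bounded_of_no_escape (δ lam : ℝ) (hδ : 0 < δ) (x : ℤ → ℂ)
    (hinit : x (-1) = 1)
    (hrec : ∀ n : ℤ, 1 ≤ n → x (n + 1) = 2 * x n * x (n - 1) - x (n - 2))
    (hinv : ∀ n : ℤ, 0 ≤ n →
      x (n + 1) ^ 2 + x n ^ 2 + x (n - 1) ^ 2
        - 2 * x (n + 1) * x n * x (n - 1) - 1 = ((lam ^ 2 / 4 : ℝ) : ℂ))
    (hesc : ¬ ∃ N : ℤ, 0 ≤ N ∧ ‖x (N - 1)‖ ≤ 1 + δ ∧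
      1 + δ < ‖x N‖ ∧ 1 + δ < ‖x (N + 1)‖) :
    ∃ C : ℝ, ∀ n : ℤ, -1 ≤ n → ‖x n‖ ≤ C := by
  push_neg at hesc
  -- no two consecutive big values
  have key : ∀ N : ℤ, 0 ≤ N → ¬ (1 + δ < ‖x N‖ ∧
      1 + δ < ‖x (N + 1)‖) := by
    have base : ¬ (1 + δ < ‖x 0‖ ∧ 1 + δ < ‖x (0 + 1)‖) := by
      rintro ⟨h1, h2⟩
      have h := hesc 0 le_rfl (by rw [show (0:ℤ) - 1 = -1 by norm_num, hinit]; simp; linarith) h1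
      rw [zero_add] at h2
      exact absurd h2 (not_lt.mpr h)
    have succ : ∀ n : ℤ, 0 ≤ n →
        ¬ (1 + δ < ‖x n‖ ∧ 1 + δ < ‖x (n + 1)‖) →
        ¬ (1 + δ < ‖x (n + 1)‖ ∧ 1 + δ < ‖x (n + 1 + 1)‖) := by
      rintro n hn ih ⟨h1, h2⟩
      have h0 : 1 + δ < ‖x ((n + 1) - 1)‖ := by
        by_contra h
        push_neg at h
        exact absurd h2 (not_lt.mpr (hesc (n + 1) (by linarith) h h1))
      rw [add_sub_cancel_right] at h0
      exact ih ⟨h0, h1⟩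
    exact fun N hN => Int.le_induction base succ N hN
  set C : ℝ := max (1 + δ) (lam ^ 2 / 4 + 1 + 4 * (1 + δ) ^ 2) with hC
  refine ⟨C, fun n hn => ?_⟩
  rcases lt_or_ge (-1 : ℤ) n with hn' | hn'
  · have hn0 : 0 ≤ n := by linarith
    rcases le_or_gt (‖x n‖) (1 + δ) with hb | hb
    · exact hb.trans (le_max_left _ _)
    · -- neighbors small
      have hnext : ‖x (n + 1)‖ ≤ 1 + δ := by
        by_contra h
        push_neg at h
        exact key n hn0 ⟨hb, h⟩
      have hprev : ‖x (n - 1)‖ ≤ 1 + δ := by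
        rcases eq_or_lt_of_le hn0 with h0 | h0
        · rw [← h0, show (0:ℤ) - 1 = -1 by norm_num, hinit]
          simp
          linarith
        · by_contra h
          push_neg at h
          have := key (n - 1) (by omega)
          simp only [sub_add_cancel] at this
          exact this ⟨h, hb⟩
      have heq := hinv n hn0
      have e2 : x n ^ 2 = ((lam ^ 2 / 4 : ℝ) : ℂ) + 1 - x (n + 1) ^ 2
          - x (n - 1) ^ 2 + 2 * x (n + 1) * x n * x (n - 1) := by
        linear_combination heq
      set a := ‖x n‖ with ha
      set A := ‖x (n + 1)‖ with hA
      set B := ‖x (n - 1)‖ with hB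
      have tsub : ∀ u v : ℂ, ‖u - v‖ ≤ ‖u‖ + ‖v‖ := by
        intro u v
        simpa [sub_eq_add_neg] using norm_add_le u (-v)
      have habs : a ^ 2 ≤ lam ^ 2 / 4 + 1 + A ^ 2 + B ^ 2 + 2 * A * a * B := by
        have h1 : a ^ 2 = ‖x n ^ 2‖ := by rw [norm_pow]
        have t1 : ‖((lam ^ 2 / 4 : ℝ) : ℂ)‖ = lam ^ 2 / 4 := by
          rw [Complex.norm_real, Real.norm_eq_abs]; exact abs_of_nonneg (by positivity)
        have tr : ‖2 * x (n + 1) * x n * x (n - 1)‖ = 2 * A * a * B := by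
          rw [ha, hA, hB]; simp [norm_mul]
        rw [h1, e2]
        calc ‖((lam ^ 2 / 4 : ℝ) : ℂ) + 1 - x (n + 1) ^ 2
              - x (n - 1) ^ 2 + 2 * x (n + 1) * x n * x (n - 1)‖
            ≤ ‖((lam ^ 2 / 4 : ℝ) : ℂ) + 1 - x (n + 1) ^ 2 - x (n - 1) ^ 2‖
              + ‖2 * x (n + 1) * x n * x (n - 1)‖ := norm_add_le _ _
          _ ≤ (‖((lam ^ 2 / 4 : ℝ) : ℂ) + 1 - x (n + 1) ^ 2‖
              + ‖x (n - 1) ^ 2‖) + 2 * A * a * B := by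
              rw [tr]; gcongr; exact tsub _ _
          _ ≤ ((‖((lam ^ 2 / 4 : ℝ) : ℂ) + 1‖ + ‖x (n + 1) ^ 2‖)
              + ‖x (n - 1) ^ 2‖) + 2 * A * a * B := by
              gcongr; exact tsub _ _
          _ ≤ ((‖((lam ^ 2 / 4 : ℝ) : ℂ)‖ + ‖(1 : ℂ)‖ + A ^ 2)
              + B ^ 2) + 2 * A * a * B := by
              rw [norm_pow, norm_pow]
              gcongr
              exact norm_add_le _ _
          _ = lam ^ 2 / 4 + 1 + A ^ 2 + B ^ 2 + 2 * A * a * B := by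
              rw [t1, norm_one]
      have hA0 : 0 ≤ A := norm_nonneg _
      have hB0 : 0 ≤ B := norm_nonneg _
      have ha0 : (0:ℝ) ≤ a := norm_nonneg _
      have ha1 : 1 ≤ a := by linarith
      have hA2 : A ^ 2 ≤ (1 + δ) ^ 2 := pow_le_pow_left₀ hA0 hnext 2
      have hB2 : B ^ 2 ≤ (1 + δ) ^ 2 := pow_le_pow_left₀ hB0 hprev 2
      have h2 : 2 * A * a * B ≤ 2 * (1 + δ) * a * (1 + δ) := by
        nlinarith [mul_nonneg (mul_nonneg (sub_nonneg.mpr hnext) ha0) hB0,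
          mul_nonneg (mul_nonneg (sub_nonneg.mpr hprev) ha0)
            (show (0:ℝ) ≤ 1 + δ by linarith)]
      have h3 : a ^ 2 ≤ (lam ^ 2 / 4 + 1 + 2 * (1 + δ) ^ 2) + 2 * (1 + δ) ^ 2 * a := by
        nlinarith [habs]
      have hK : (0:ℝ) ≤ lam ^ 2 / 4 + 1 + 2 * (1 + δ) ^ 2 := by positivity
      have : a ≤ lam ^ 2 / 4 + 1 + 4 * (1 + δ) ^ 2 := by
        nlinarith [mul_nonneg (show (0:ℝ) ≤ a - 1 by linarith) hK]
      exact this.trans (le_max_right _ _)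
  · have : n = -1 := le_antisymm hn' hn
    rw [this, hinit]
    simp
    exact le_trans (by linarith) (le_max_left _ _)
end
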